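/- Let $\{Z_n\}_n$ be a sequence of complex matrices with $Z_n$ of size $sn \times tn$ for fixed positive integers $s,t$, and suppose for every $n$ one can write $Z_n = R_n + N_n$ where $\mathrm{rank}(R_n)/n \to 0$ and $\|N_n\| \to 0$ (spectral norm) as $n \to \infty$. Then for every continuous compactly supported function $F: \mathbb{R} \to \mathbb{C}$, with $r = \min\{s,t\}$, $\lim_{n\to\infty} \frac{1}{rn} \sum_{i=1}^{rn} F(\sigma_i(Z_n)) = F(0)$, i.e. $\{Z_n\}_n$ is zero-distributed in the sense of singular values. -/

import Mathlib

open Filter Finset Matrix Topology MeasureTheory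

/-- The (unsorted) singular values of a complex matrix: square roots of the
eigenvalues of `Aᴴ * A`. -/
noncomputable def svals {m n : Type*} [Fintype m] [Fintype n] [DecidableEq n]
    (A : Matrix m n ℂ) (i : n) : ℝ :=
  Real.sqrt ((Matrix.isHermitian_conjTranspose_mul_self A).eigenvalues i)

/-- Singular values of a `Fin p × Fin q`-indexed complex matrix, arranged in
non-increasing order and indexed by `ℕ` (zero for indices `≥ q`); so
`svalFun A 0` is the largest singular value `σ₁(A)`. -/
noncomputable def svalFun {p q : ℕ} (A : Matrix (Fin p) (Fin q) ℂ) (j : ℕ) : ℝ :=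
  if h : j < q then svals A (Tuple.sort (svals A) ((⟨j, h⟩ : Fin q).rev)) else 0

/-- The spectral norm of a complex matrix: its largest singular value. -/
noncomputable def specNorm {m n : Type*} [Fintype m] [Fintype n] [DecidableEq n]
    (A : Matrix m n ℂ) : ℝ :=
  ⨆ i, svals A i

/-!
Weyl-type counting: let `V` be the span of the right singular vectors of `R + N` whose singular
values exceed `‖N‖`. On `V ∩ ker R` we have `‖N x‖ = ‖(R + N) x‖ > ‖N‖ ‖x‖` unless `x = 0`, so
`V ∩ ker R = 0`, i.e. `dim V ≤ rank R`. For `Zₙ = Rₙ + Nₙ`, once `‖Nₙ‖ ≤ ε` all but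
`rank Rₙ = o(n)` of the `r n` singular values lie in `[0, ε]`, where `F` is close to `F 0`;
the others contribute at most `2 ‖F‖∞ rank Rₙ / (r n)` to the average.
-/

section Kernel

variable {m n K : Type*} [Fintype n] [Field K]

lemma exists_mulVec_eq_zero_of_rank_lt (B : Matrix m n K) (h : B.rank < Fintype.card n) :
    ∃ v ≠ 0, B *ᵥ v = 0 := by
  have hker : LinearMap.ker B.mulVecLin ≠ ⊥ := fun hbot => by
    have := LinearMap.finrank_range_add_finrank_ker B.mulVecLin
    rw [hbot, finrank_bot, add_zero, Module.finrank_fintype_fun_eq_card, ← rank] at this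
    omega
  obtain ⟨v, hv, hv0⟩ := Submodule.exists_mem_ne_zero_of_ne_bot hker
  exact ⟨v, hv0, hv⟩

lemma exists_mulVec_eq_zero_of_rank_lt_card [DecidableEq n] (B : Matrix m n K) (S : Finset n)
    (h : B.rank < #S) : ∃ y ≠ 0, (∀ i ∉ S, y i = 0) ∧ B *ᵥ y = 0 := by
  obtain ⟨c, hc0, hc⟩ := exists_mulVec_eq_zero_of_rank_lt (B.submatrix id ((↑) : S → n))
    (by simpa using (rank_submatrix_le B id _).trans_lt h)
  set y : n → K := fun i => if hi : i ∈ S then c ⟨i, hi⟩ else 0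
  refine ⟨y, fun hy => hc0 (funext fun j => by simpa [y] using congrFun hy j),
    fun i hi => dif_neg hi, ?_⟩
  rw [← hc]
  ext i
  simp only [mulVec, dotProduct, submatrix_apply, id]
  rw [← Finset.sum_subset (Finset.subset_univ S) fun j _ hj => by simp [y, hj],
    ← Finset.sum_coe_sort S]
  simp [y]

end Kernel

section SingularValues

variable {m n : Type*} [Fintype m] [Fintype n] [DecidableEq n]

lemma svals_nonneg (A : Matrix m n ℂ) (i : n) : 0 ≤ svals A i := Real.sqrt_nonneg _

lemma sq_svals (A : Matrix m n ℂ) (i : n) :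
    svals A i ^ 2 = (isHermitian_conjTranspose_mul_self A).eigenvalues i :=
  Real.sq_sqrt (eigenvalues_conjTranspose_mul_self_nonneg A i)

lemma svals_le_specNorm (A : Matrix m n ℂ) (i : n) : svals A i ≤ specNorm A :=
  le_ciSup (Set.finite_range _).bddAbove i

lemma specNorm_nonneg (A : Matrix m n ℂ) : 0 ≤ specNorm A := Real.iSup_nonneg (svals_nonneg A)

end SingularValues

section SingularCoordinates

variable {m n : Type*} [Fintype m] [Fintype n]

lemma re_star_dotProduct_self (v : n → ℂ) : (star v ⬝ᵥ v).re = ∑ i, Complex.normSq (v i) := by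
  simp [dotProduct, Complex.re_sum, Complex.normSq_apply, mul_comm]

lemma star_mulVec_dotProduct_mulVec (A : Matrix m n ℂ) (v : n → ℂ) :
    star (A *ᵥ v) ⬝ᵥ (A *ᵥ v) = star v ⬝ᵥ ((Aᴴ * A) *ᵥ v) := by
  rw [star_mulVec, dotProduct_mulVec, dotProduct_mulVec, vecMul_vecMul]

variable [DecidableEq n]

lemma star_unitary_mulVec_dotProduct (U : unitaryGroup n ℂ) (v : n → ℂ) :
    star ((U : Matrix n n ℂ) *ᵥ v) ⬝ᵥ ((U : Matrix n n ℂ) *ᵥ v) = star v ⬝ᵥ v := by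
  rw [star_mulVec_dotProduct_mulVec, ← star_eq_conjTranspose, Unitary.coe_star_mul_self,
    one_mulVec]

lemma re_star_mulVec_eigenvectorUnitary_dotProduct (A : Matrix m n ℂ) (y : n → ℂ) :
    (star (A *ᵥ ((isHermitian_conjTranspose_mul_self A).eigenvectorUnitary *ᵥ y)) ⬝ᵥ
      (A *ᵥ ((isHermitian_conjTranspose_mul_self A).eigenvectorUnitary *ᵥ y))).re
      = ∑ i, svals A i ^ 2 * Complex.normSq (y i) := by
  have hdiag := (isHermitian_conjTranspose_mul_self A).conjStarAlgAut_star_eigenvectorUnitary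
  rw [Unitary.conjStarAlgAut_star_apply] at hdiag
  rw [mulVec_mulVec, star_mulVec_dotProduct_mulVec, conjTranspose_mul, ← star_eq_conjTranspose,
    Matrix.mul_assoc, ← Matrix.mul_assoc _ A, ← Matrix.mul_assoc, hdiag]
  simp only [dotProduct, mulVec_diagonal, Complex.re_sum, sq_svals]
  refine Finset.sum_congr rfl fun i _ => ?_
  simp [Complex.normSq_apply]
  ring

lemma re_star_mulVec_dotProduct_le (A : Matrix m n ℂ) (x : n → ℂ) :
    (star (A *ᵥ x) ⬝ᵥ (A *ᵥ x)).re ≤ specNorm A ^ 2 * (star x ⬝ᵥ x).re := by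
  set U := (isHermitian_conjTranspose_mul_self A).eigenvectorUnitary
  obtain ⟨y, rfl⟩ : ∃ y, (U : Matrix n n ℂ) *ᵥ y = x :=
    ⟨star (U : Matrix n n ℂ) *ᵥ x, by rw [mulVec_mulVec, mem_unitaryGroup_iff.mp U.2, one_mulVec]⟩
  rw [re_star_mulVec_eigenvectorUnitary_dotProduct, star_unitary_mulVec_dotProduct,
    re_star_dotProduct_self, Finset.mul_sum]
  gcongr with i
  · exact Complex.normSq_nonneg _
  · exact svals_nonneg A i
  · exact svals_le_specNorm A i

lemma lt_re_star_mulVec_eigenvectorUnitary_dotProduct (A : Matrix m n ℂ) {a : ℝ} (ha : 0 ≤ a)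
    {y : n → ℂ} (hy : y ≠ 0) (hsupp : ∀ i, y i ≠ 0 → a < svals A i) :
    a ^ 2 * (star y ⬝ᵥ y).re <
      (star (A *ᵥ ((isHermitian_conjTranspose_mul_self A).eigenvectorUnitary *ᵥ y)) ⬝ᵥ
        (A *ᵥ ((isHermitian_conjTranspose_mul_self A).eigenvectorUnitary *ᵥ y))).re := by
  rw [re_star_mulVec_eigenvectorUnitary_dotProduct, re_star_dotProduct_self, Finset.mul_sum]
  obtain ⟨j, hj⟩ := Function.ne_iff.mp hy
  refine Finset.sum_lt_sum (fun i _ => ?_) ⟨j, Finset.mem_univ j, ?_⟩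
  · by_cases hi : y i = 0
    · simp [hi]
    · gcongr
      · exact Complex.normSq_nonneg _
      · exact (hsupp i hi).le
  · gcongr
    · exact Complex.normSq_pos.2 hj
    · exact hsupp j hj

theorem card_specNorm_lt_svals_add_le_rank (R N : Matrix m n ℂ) :
    #{i | specNorm N < svals (R + N) i} ≤ R.rank := by
  by_contra! h
  set U := (isHermitian_conjTranspose_mul_self (R + N)).eigenvectorUnitary
  obtain ⟨y, hy0, hyS, hRy⟩ := exists_mulVec_eq_zero_of_rank_lt_card (R * (U : Matrix n n ℂ)) _
    ((rank_mul_le_left _ _).trans_lt h)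
  have hZN : (R + N) *ᵥ (U *ᵥ y) = N *ᵥ (U *ᵥ y) := by
    rw [add_mulVec, mulVec_mulVec, hRy, zero_add]
  have hlower := lt_re_star_mulVec_eigenvectorUnitary_dotProduct (R + N)
    (specNorm_nonneg N) hy0 fun i hi => by
      by_contra hle
      exact hi (hyS i (by simpa using hle))
  have hupper := re_star_mulVec_dotProduct_le N (U *ᵥ y)
  rw [← hZN, star_unitary_mulVec_dotProduct] at hupper
  exact hlower.not_ge hupper

end SingularCoordinates

lemma sum_range_svalFun {M : Type*} [AddCommMonoid M] {p q : ℕ} (A : Matrix (Fin p) (Fin q) ℂ)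
    (f : ℝ → M) : ∑ j ∈ range q, f (svalFun A j) = ∑ i, f (svals A i) := by
  rw [Finset.sum_range fun j => f (svalFun A j)]
  simp only [svalFun, Fin.is_lt, dif_pos, Fin.eta]
  exact (Fin.revPerm.trans (Tuple.sort (svals A))).sum_comp fun i => f (svals A i)

lemma svalFun_nonneg {p q : ℕ} (A : Matrix (Fin p) (Fin q) ℂ) (j : ℕ) : 0 ≤ svalFun A j := by
  unfold svalFun
  split_ifs
  exacts [svals_nonneg _ _, le_rfl]

lemma card_filter_lt_svalFun_le {p q m : ℕ} (A : Matrix (Fin p) (Fin q) ℂ) (ε : ℝ) (hm : m ≤ q) :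
    #{j ∈ range m | ε < svalFun A j} ≤ #{i | ε < svals A i} :=
  calc #{j ∈ range m | ε < svalFun A j}
      ≤ #{j ∈ range q | ε < svalFun A j} :=
        card_le_card (filter_subset_filter _ (range_subset_range.2 hm))
    _ = #{i | ε < svals A i} := by
        simp only [card_filter]
        exact sum_range_svalFun A fun x => if ε < x then 1 else 0

lemma card_filter_lt_abs_svalFun_add_le_rank {p q m : ℕ} (R N : Matrix (Fin p) (Fin q) ℂ) {ε : ℝ}
    (hN : specNorm N ≤ ε) (hm : m ≤ q) :
    #{j ∈ range m | ε < |svalFun (R + N) j|} ≤ R.rank :=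
  calc #{j ∈ range m | ε < |svalFun (R + N) j|}
      = #{j ∈ range m | ε < svalFun (R + N) j} := by
        simp only [abs_of_nonneg (svalFun_nonneg _ _)]
    _ ≤ #{i | ε < svals (R + N) i} := card_filter_lt_svalFun_le _ _ hm
    _ ≤ #{i | specNorm N < svals (R + N) i} :=
        card_le_card (monotone_filter_right _ fun _ _ hi => hN.trans_lt hi)
    _ ≤ R.rank := card_specNorm_lt_svals_add_le_rank R N

lemma norm_smul_sum_sub_le {E : Type*} [NormedAddCommGroup E] [NormedSpace ℝ E] {F : ℝ → E}
    {C ε η : ℝ} (hη : 0 ≤ η) (hC : ∀ x, ‖F x‖ ≤ C) (hF : ∀ x, |x| ≤ ε → ‖F x - F 0‖ ≤ η)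
    (σ : ℕ → ℝ) {m : ℕ} (hm : 0 < m) :
    ‖(1 / (m : ℝ)) • ∑ j ∈ range m, F (σ j) - F 0‖
      ≤ η + 2 * C * #{j ∈ range m | ε < |σ j|} / m := by
  have hm' : (0 : ℝ) < m := Nat.cast_pos.2 hm
  have hterm : ∀ j, ‖F (σ j) - F 0‖ ≤ η + 2 * C * if ε < |σ j| then 1 else 0 := by
    intro j
    split_ifs with hj
    · linarith [norm_sub_le (F (σ j)) (F 0), hC (σ j), hC 0]
    · simpa using hF _ (not_lt.1 hj)
  have hcenter : (1 / (m : ℝ)) • ∑ j ∈ range m, F (σ j) - F 0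
      = (1 / (m : ℝ)) • ∑ j ∈ range m, (F (σ j) - F 0) := by
    rw [sum_sub_distrib, smul_sub, sum_const, card_range, ← Nat.cast_smul_eq_nsmul ℝ, smul_smul,
      one_div, inv_mul_cancel₀ hm'.ne', one_smul]
  calc ‖(1 / (m : ℝ)) • ∑ j ∈ range m, F (σ j) - F 0‖
      ≤ 1 / m * ∑ j ∈ range m, ‖F (σ j) - F 0‖ := by
        rw [hcenter, norm_smul, Real.norm_of_nonneg (by positivity)]
        gcongr
        exact norm_sum_le _ _
    _ ≤ 1 / m * ∑ j ∈ range m, (η + 2 * C * if ε < |σ j| then 1 else 0) := by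
        gcongr with j
        exact hterm j
    _ = η + 2 * C * #{j ∈ range m | ε < |σ j|} / m := by
        rw [sum_add_distrib, ← mul_sum, ← natCast_card_filter, sum_const, card_range, nsmul_eq_mul]
        field_simp

/-- if `Zₙ = Rₙ + Nₙ` with `rank Rₙ / n → 0` and `‖Nₙ‖ → 0`, then
`{Zₙ}ₙ` is zero-distributed in the sense of the singular values. -/
theorem zero_distributed_of_rank_norm_split (s t : ℕ) (hs : 0 < s) (ht : 0 < t)
    (Z R N : (n : ℕ) → Matrix (Fin (s * n)) (Fin (t * n)) ℂ)
    (hdec : ∀ n, Z n = R n + N n)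
    (hrank : Tendsto (fun n => ((R n).rank : ℝ) / n) atTop (nhds 0))
    (hnorm : Tendsto (fun n => specNorm (N n)) atTop (nhds 0)) :
    ∀ F : ℝ → ℂ, Continuous F → HasCompactSupport F →
      Tendsto (fun n => (1 / ((min s t * n : ℕ) : ℝ)) •
          ∑ j ∈ Finset.range (min s t * n), F (svalFun (Z n) j))
        atTop (nhds (F 0)) := by
  intro F hF hFc
  obtain ⟨C, hC⟩ := hFc.exists_bound_of_continuous hF
  have hC0 : 0 ≤ C := (norm_nonneg _).trans (hC 0)
  refine Metric.tendsto_nhds.2 fun η hη => ?_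
  obtain ⟨ε, hε, hFε⟩ := Metric.continuousAt_iff.1 hF.continuousAt (η / 2) (half_pos hη)
  have hnear : ∀ x, |x| ≤ ε / 2 → ‖F x - F 0‖ ≤ η / 2 := fun x hx => by
    rw [← dist_eq_norm]
    exact (hFε (by rw [Real.dist_0_eq_abs]; linarith)).le
  have hcount : ∀ᶠ n in atTop,
      #{j ∈ range (min s t * n) | ε / 2 < |svalFun (Z n) j|} ≤ (R n).rank := by
    filter_upwards [hnorm.eventually (gt_mem_nhds (half_pos hε))] with n hn
    rw [hdec n]
    exact card_filter_lt_abs_svalFun_add_le_rank _ _ hn.le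
      (Nat.mul_le_mul_right n (min_le_right s t))
  have hdensity : Tendsto (fun n => 2 * C * (R n).rank / ((min s t * n : ℕ) : ℝ)) atTop (𝓝 0) := by
    have := (hrank.div_const (min s t : ℝ)).const_mul (2 * C)
    rw [zero_div, mul_zero] at this
    exact this.congr fun n => by push_cast; ring
  filter_upwards [hcount, hdensity.eventually (gt_mem_nhds (half_pos hη)),
    eventually_gt_atTop 0] with n hcount hsmall hn
  rw [dist_eq_norm]
  calc _ ≤ η / 2 + 2 * C * #{j ∈ range (min s t * n) | ε / 2 < |svalFun (Z n) j|}
          / ((min s t * n : ℕ) : ℝ) :=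
        norm_smul_sum_sub_le (half_pos hη).le hC hnear _ (Nat.mul_pos (lt_min hs ht) hn)
    _ ≤ η / 2 + 2 * C * (R n).rank / ((min s t * n : ℕ) : ℝ) := by
        gcongr
    _ < η := by linarith
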